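/- Let G be a 4-regular finite simple pfaffian graph on an even number n of vertices. Then the number of perfect matchings of G is at most 4^{n/4} = 2^{n/2}. -/

import Mathlib

open scoped Classical
open Matrix

/-- `M` is a perfect matching of `G`: a set of edges of `G` such that every vertex
belongs to exactly one edge of `M`. -/
def IsPerfMatching {V : Type*} [Fintype V] (G : SimpleGraph V) (M : Finset (Sym2 V)) : Prop :=
  (∀ e ∈ M, e ∈ G.edgeSet) ∧ ∀ v : V, ∃! e, e ∈ M ∧ v ∈ e

/-- The number of perfect matchings of `G`. -/
noncomputable def perfmat {V : Type*} [Fintype V] (G : SimpleGraph V) : ℕ :=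
  Nat.card {M : Finset (Sym2 V) // IsPerfMatching G M}

/-- `G` is pfaffian: there is a real skew-symmetric matrix `S` indexed by the vertices,
with `S u v ∈ {1,-1}` whenever `{u,v}` is an edge and `S u v = 0` otherwise, such that
`det S = (perfmat G)²`. -/
def IsPfaffian {V : Type*} [Fintype V] (G : SimpleGraph V) : Prop :=
  ∃ S : Matrix V V ℝ, Sᵀ = -S ∧
    (∀ u v : V, G.Adj u v → S u v = 1 ∨ S u v = -1) ∧
    (∀ u v : V, ¬ G.Adj u v → S u v = 0) ∧
    S.det = (perfmat G : ℝ) ^ 2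

/-- `G` contains no 4-cycles. -/
def No4Cycles {V : Type*} (G : SimpleGraph V) : Prop :=
  ∀ a b c d : V, a ≠ b → a ≠ c → a ≠ d → b ≠ c → b ≠ d → c ≠ d →
    ¬ (G.Adj a b ∧ G.Adj b c ∧ G.Adj c d ∧ G.Adj d a)

/-!
If `S` is a pfaffian signing of `G`, then `perfmat G ^ 4 = det S ^ 2 = det (Sᵀ S)`. The matrix
`Sᵀ S` is positive semidefinite, and since `S ⊙ S` is the adjacency matrix its trace is
`∑ v, deg v = 4 n`. AM–GM applied to its eigenvalues (Hadamard's inequality) then gives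
`det (Sᵀ S) ≤ (4 n / n) ^ n = 4 ^ n`.
-/

open Finset in
theorem Real.prod_le_average_pow {ι : Type*} (s : Finset ι) (z : ι → ℝ)
    (hz : ∀ i ∈ s, 0 ≤ z i) : ∏ i ∈ s, z i ≤ ((∑ i ∈ s, z i) / #s) ^ #s := by
  rcases s.eq_empty_or_nonempty with rfl | hs
  · simp
  have hcard : (0 : ℝ) < #s := by exact_mod_cast hs.card_pos
  have amgm := Real.geom_mean_le_arith_mean s (fun _ ↦ 1) z (fun _ _ ↦ zero_le_one)
    (by simpa using hcard) hz
  simp only [Real.rpow_one, one_mul, sum_const, nsmul_eq_mul, mul_one] at amgm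
  have hprod : 0 ≤ ∏ i ∈ s, z i := prod_nonneg hz
  calc ∏ i ∈ s, z i = ((∏ i ∈ s, z i) ^ (#s : ℝ)⁻¹) ^ #s :=
        (Real.rpow_inv_natCast_pow hprod hs.card_pos.ne').symm
    _ ≤ ((∑ i ∈ s, z i) / #s) ^ #s := pow_le_pow_left₀ (by positivity) amgm _

theorem Matrix.PosSemidef.det_le_trace_div_card_pow {n : Type*} [Fintype n] [DecidableEq n]
    {A : Matrix n n ℝ} (hA : A.PosSemidef) :
    A.det ≤ (A.trace / Fintype.card n) ^ Fintype.card n := by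
  have hH := hA.isHermitian
  simpa [hH.det_eq_prod_eigenvalues, hH.trace_eq_sum_eigenvalues] using
    Real.prod_le_average_pow Finset.univ hH.eigenvalues fun i _ ↦ hA.eigenvalues_nonneg i

theorem Matrix.det_sq_le_trace_transpose_mul_self_div_card_pow {n : Type*} [Fintype n]
    [DecidableEq n] (S : Matrix n n ℝ) :
    S.det ^ 2 ≤ ((Sᵀ * S).trace / Fintype.card n) ^ Fintype.card n := by
  have hPSD : (Sᵀ * S).PosSemidef := by
    simpa using posSemidef_conjTranspose_mul_self S
  simpa [det_mul, sq] using hPSD.det_le_trace_div_card_pow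

namespace SimpleGraph

variable {V α : Type*} {G : SimpleGraph V} [DecidableRel G.Adj]

theorem hadamard_self_eq_adjMatrix_of_signs [Ring α] {S : Matrix V V α}
    (hadj : ∀ u v, G.Adj u v → S u v = 1 ∨ S u v = -1) (hnadj : ∀ u v, ¬ G.Adj u v → S u v = 0) :
    S ⊙ S = G.adjMatrix α := by
  ext u v
  by_cases h : G.Adj u v
  · rcases hadj u v h with h1 | h1 <;> simp [h, h1]
  · simp [h, hnadj u v h]

theorem trace_transpose_mul_self_eq_sum_degree [Fintype V] [NonAssocSemiring α] {S : Matrix V V α}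
    (hS : S ⊙ S = G.adjMatrix α) : (Sᵀ * S).trace = ∑ v, (G.degree v : α) := by
  refine Finset.sum_congr rfl fun v _ ↦ ?_
  calc (Sᵀ * S) v v = (1 ᵥ* (S ⊙ S)) v := by simp [mul_apply, vecMul, dotProduct]
    _ = G.degree v := by simp [hS, adjMatrix_vecMul_apply]

theorem IsRegularOfDegree.det_sq_le_pow [Fintype V] {d : ℕ} (hreg : G.IsRegularOfDegree d)
    {S : Matrix V V ℝ} (hS : S ⊙ S = G.adjMatrix ℝ) : S.det ^ 2 ≤ (d : ℝ) ^ Fintype.card V := by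
  have htrace : (Sᵀ * S).trace = Fintype.card V * d := by
    simp [trace_transpose_mul_self_eq_sum_degree hS, hreg.degree_eq]
  refine (det_sq_le_trace_transpose_mul_self_div_card_pow S).trans_eq ?_
  rcases (Fintype.card V).eq_zero_or_pos with hV | hV
  · simp [hV]
  · rw [htrace, mul_div_cancel_left₀ _ (by positivity)]

end SimpleGraph

theorem Real.le_rpow_div_of_pow_le {x y : ℝ} {k m : ℕ} (hx : 0 ≤ x) (hy : 0 ≤ y) (hk : k ≠ 0)
    (h : x ^ k ≤ y ^ m) : x ≤ y ^ ((m : ℝ) / k) := by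
  rw [div_eq_mul_inv, Real.rpow_mul hy, Real.rpow_natCast,
    Real.le_rpow_inv_iff_of_pos hx (pow_nonneg hy m) (by positivity), Real.rpow_natCast]
  exact h

theorem perfmat_quartic_pfaffian_general {V : Type*} [Fintype V] (G : SimpleGraph V)
    [DecidableRel G.Adj]
    (hreg : G.IsRegularOfDegree 4) (hG : IsPfaffian G) :
    (perfmat G : ℝ) ≤ 4 ^ ((Fintype.card V : ℝ) / 4) ∧
      (4 : ℝ) ^ ((Fintype.card V : ℝ) / 4) = 2 ^ ((Fintype.card V : ℝ) / 2) := by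
  obtain ⟨S, -, hadj, hnadj, hdet⟩ := hG
  have hbound : (perfmat G : ℝ) ^ 4 ≤ 4 ^ Fintype.card V := by
    have := hreg.det_sq_le_pow (SimpleGraph.hadamard_self_eq_adjMatrix_of_signs hadj hnadj)
    rw [hdet, ← pow_mul] at this
    exact_mod_cast this
  refine ⟨Real.le_rpow_div_of_pow_le (Nat.cast_nonneg _) (by norm_num) four_ne_zero hbound, ?_⟩
  rw [show (4 : ℝ) = 2 ^ (2 : ℝ) by norm_num, ← Real.rpow_mul zero_le_two]
  ring_nf

/-- A 4-regular pfaffian graph on an even number `n` of vertices has at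
most `4^{n/4} = 2^{n/2}` perfect matchings. -/
theorem perfmat_quartic_pfaffian {V : Type*} [Fintype V] (G : SimpleGraph V)
    [DecidableRel G.Adj] (hV : Even (Fintype.card V))
    (hreg : G.IsRegularOfDegree 4) (hG : IsPfaffian G) :
    (perfmat G : ℝ) ≤ 4 ^ ((Fintype.card V : ℝ) / 4) ∧
      (4 : ℝ) ^ ((Fintype.card V : ℝ) / 4) = 2 ^ ((Fintype.card V : ℝ) / 2) :=
  perfmat_quartic_pfaffian_general G hreg hG
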